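/- Let n ≥ 1 and let a, b > 0. Suppose ξ_1 > ξ_2 > … > ξ_n are real numbers such that, with p : ℂ → ℂ defined by p(ξ) = ∏_{j=1}^n (ξ − ξ_j), the difference equation A(ξ)·(p(ξ+i) − p(ξ)) + A(−ξ)·(p(ξ−i) − p(ξ)) = E_n · p(ξ) holds for every ξ ∈ ℂ, where A(ξ) = (ξ+ia)(ξ+ib) and E_n = −n(n+2a+2b−1). Then for all 1 ≤ j < j′ ≤ n one has ξ_j − ξ_{j′} ≥ π(j′−j)/k₋, where k₋ = n + a^{−1} + b^{−1}. -/

import Mathlib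

/-!
Write `A(x) p(x + i) = ‖A(x) p(x + i)‖ e^{iθ(x)}` on the real line, where
`θ(x) = arg(x + ia) + arg(x + ib) + ∑ⱼ arg(x - ξⱼ + i)` is the continuous branch.
At a zero `ξₖ` of `p` the difference equation reduces to `w + w̄ = 0` for
`w = A(ξₖ) p(ξₖ + i)`, so `θ(ξₖ) ∈ π/2 + πℤ`. As `θ` is strictly decreasing, the values
`θ(ξ₁) < ⋯ < θ(ξₙ)` are distinct points of `π/2 + πℤ`, hence
`θ(ξ_{j'}) - θ(ξ_j) ≥ π(j' - j)`. On the other hand `|θ'| ≤ n + a⁻¹ + b⁻¹ = k₋`,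
because `arctan` is `1`-Lipschitz.
-/

open Real Finset

theorem Real.lipschitzWith_arctan : LipschitzWith 1 arctan :=
  lipschitzWith_of_nnnorm_deriv_le differentiable_arctan fun x => by
    rw [← NNReal.coe_le_coe, coe_nnnorm, deriv_arctan, norm_eq_abs, NNReal.coe_one,
      abs_of_pos (by positivity), div_le_one (by positivity)]
    nlinarith [sq_nonneg x]

theorem Real.arctan_sub_arctan_le {x y : ℝ} (hxy : x ≤ y) : arctan y - arctan x ≤ y - x := by
  simpa [dist_eq_norm, norm_eq_abs, abs_of_nonneg (sub_nonneg.2 hxy)] using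
    (le_abs_self _).trans (lipschitzWith_arctan.dist_le_mul y x)

theorem Fin.sub_le_sub_of_strictMono {n : ℕ} {g : Fin n → ℤ} (hg : StrictMono g) {i j : Fin n}
    (hij : i ≤ j) : (j : ℤ) - i ≤ g j - g i := by
  have hcard := card_le_card_of_injOn g (s := Icc i j) (t := Icc (g i) (g j))
    (fun k hk => by
      rw [coe_Icc, Set.mem_Icc] at hk ⊢
      exact ⟨hg.monotone hk.1, hg.monotone hk.2⟩)
    hg.injective.injOn
  rw [Fin.card_Icc, Int.card_Icc] at hcard
  have : (i : ℕ) ≤ j := hij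
  omega

theorem pi_mul_sub_le_sub_of_cos_eq_zero {n : ℕ} {u : Fin n → ℝ} (hu : StrictMono u)
    (hcos : ∀ k, cos (u k) = 0) {i j : Fin n} (hij : i ≤ j) :
    π * ((j : ℝ) - i) ≤ u j - u i := by
  choose m hm using fun k => cos_eq_zero_iff.1 (hcos k)
  have hmono : StrictMono m := fun k l hkl => by
    have := hu hkl
    rw [hm k, hm l] at this
    exact_mod_cast (by nlinarith [pi_pos] : (m k : ℝ) < m l)
  have hgap : ((j : ℝ) - i) ≤ m j - m i := by
    exact_mod_cast Fin.sub_le_sub_of_strictMono hmono hij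
  rw [hm i, hm j]
  linarith [mul_le_mul_of_nonneg_left hgap pi_pos.le]

open Complex in
theorem Complex.mul_eq_norm_mul_exp {z w : ℂ} {θ φ : ℝ} (hz : z = ‖z‖ * exp (θ * I))
    (hw : w = ‖w‖ * exp (φ * I)) : z * w = ‖z * w‖ * exp ((θ + φ : ℝ) * I) := by
  rw [norm_mul, ofReal_add, add_mul, exp_add]
  nth_rewrite 1 [hz, hw]
  push_cast
  ring

open Complex in
theorem Complex.prod_eq_norm_mul_exp {ι : Type*} (s : Finset ι) {z : ι → ℂ} {θ : ι → ℝ}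
    (h : ∀ i ∈ s, z i = ‖z i‖ * exp (θ i * I)) :
    ∏ i ∈ s, z i = ‖∏ i ∈ s, z i‖ * exp ((∑ i ∈ s, θ i : ℝ) * I) := by
  rw [norm_prod, ofReal_prod, ofReal_sum, sum_mul, exp_sum, ← prod_mul_distrib]
  exact prod_congr rfl h

open Complex in
theorem Complex.cos_eq_zero_of_re_eq_zero {z : ℂ} {θ : ℝ} (hz : z = ‖z‖ * exp (θ * I))
    (hz0 : z ≠ 0) (hre : z.re = 0) : Real.cos θ = 0 := by
  rw [hz, re_ofReal_mul, exp_ofReal_mul_I_re] at hre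
  exact (mul_eq_zero.1 hre).resolve_left (norm_ne_zero_iff.2 hz0)

namespace ContinuousHahn

open Complex (I exp)

/-- `Complex.arg (x + I * c)` for `c > 0`, written so that phases of products add exactly. -/
noncomputable def phase (c x : ℝ) : ℝ := π / 2 - arctan (x / c)

theorem phase_strictAnti {c : ℝ} (hc : 0 < c) : StrictAnti (phase c) := fun _ _ hxy =>
  sub_lt_sub_left (arctan_strictMono (div_lt_div_of_pos_right hxy hc)) _

theorem phase_sub_phase_le {c x y : ℝ} (hc : 0 < c) (hxy : x ≤ y) :
    phase c x - phase c y ≤ c⁻¹ * (y - x) := by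
  have := arctan_sub_arctan_le (div_le_div_of_nonneg_right hxy hc.le)
  rw [phase, phase, mul_sub, inv_mul_eq_div, inv_mul_eq_div]
  linarith

theorem ofReal_add_I_mul_eq_norm_mul_exp_phase {c : ℝ} (hc : 0 < c) (x : ℝ) :
    (x : ℂ) + I * c = ‖(x : ℂ) + I * c‖ * exp (phase c x * I) := by
  have hnorm : ‖(x : ℂ) + I * c‖ = c * √(1 + (x / c) ^ 2) := by
    rw [mul_comm I, Complex.norm_add_mul_I,
      show x ^ 2 + c ^ 2 = c ^ 2 * (1 + (x / c) ^ 2) by field_simp; ring,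
      sqrt_mul (sq_nonneg c), sqrt_sq hc.le]
  rw [hnorm, Complex.exp_mul_I, ← Complex.ofReal_cos, ← Complex.ofReal_sin, phase,
    cos_pi_div_two_sub, sin_pi_div_two_sub, sin_arctan, cos_arctan]
  apply Complex.ext <;> simp <;> field_simp

variable {n : ℕ} {a b : ℝ} {ξ : Fin n → ℝ}

noncomputable def hahnPhase (a b : ℝ) (ξ : Fin n → ℝ) (x : ℝ) : ℝ :=
  phase a x + phase b x + ∑ j, phase 1 (x - ξ j)

theorem hahnPhase_strictAnti (ha : 0 < a) (hb : 0 < b) : StrictAnti (hahnPhase a b ξ) :=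
  fun x y hxy => add_lt_add_of_lt_of_le
    (add_lt_add (phase_strictAnti ha hxy) (phase_strictAnti hb hxy))
    (sum_le_sum fun j _ => (phase_strictAnti one_pos).antitone (by linarith))

theorem hahnPhase_sub_le (ha : 0 < a) (hb : 0 < b) {x y : ℝ} (hxy : x ≤ y) :
    hahnPhase a b ξ x - hahnPhase a b ξ y ≤ (n + a⁻¹ + b⁻¹) * (y - x) := by
  have hsum : ∑ j, phase 1 (x - ξ j) - ∑ j, phase 1 (y - ξ j) ≤ n * (y - x) := by
    rw [← sum_sub_distrib]
    refine (sum_le_sum fun j _ => phase_sub_phase_le one_pos (by linarith)).trans_eq ?_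
    simp only [inv_one, one_mul, sub_sub_sub_cancel_right, sum_const, card_univ,
      Fintype.card_fin, nsmul_eq_mul]
  rw [hahnPhase, hahnPhase]
  linarith [phase_sub_phase_le ha hxy, phase_sub_phase_le hb hxy]

theorem hahn_eq_norm_mul_exp_hahnPhase (ha : 0 < a) (hb : 0 < b) (x : ℝ) :
    ((x : ℂ) + I * a) * ((x : ℂ) + I * b) * ∏ j, ((x : ℂ) + I - ξ j)
      = ‖((x : ℂ) + I * a) * ((x : ℂ) + I * b) * ∏ j, ((x : ℂ) + I - ξ j)‖
        * exp (hahnPhase a b ξ x * I) := by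
  have hfactor (j : Fin n) : (x : ℂ) + I - ξ j = ((x - ξ j : ℝ) : ℂ) + I * (1 : ℝ) := by
    push_cast
    ring
  simp_rw [hfactor]
  exact Complex.mul_eq_norm_mul_exp
    (Complex.mul_eq_norm_mul_exp (ofReal_add_I_mul_eq_norm_mul_exp_phase ha x)
      (ofReal_add_I_mul_eq_norm_mul_exp_phase hb x))
    (Complex.prod_eq_norm_mul_exp _ fun j _ => ofReal_add_I_mul_eq_norm_mul_exp_phase one_pos _)

open ComplexConjugate in
theorem cos_hahnPhase_eq_zero (ha : 0 < a) (hb : 0 < b) {A p : ℂ → ℂ}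
    (hp : ∀ z, p z = ∏ j, (z - ξ j)) (hA : ∀ z, A z = (z + I * a) * (z + I * b)) {x : ℝ}
    (hx : A x * p (x + I) + A (-x) * p (x - I) = 0) : cos (hahnPhase a b ξ x) = 0 := by
  have hconj : A (-x) * p (x - I) = conj (A x * p (x + I)) := by
    simp only [hA, hp, map_mul, map_prod, map_add, map_sub, Complex.conj_ofReal,
      Complex.conj_I, ← sub_eq_add_neg]
    ring
  have hre : (A x * p (x + I)).re = 0 := by
    rw [hconj, Complex.add_conj] at hx
    exact (mul_eq_zero.1 (Complex.ofReal_eq_zero.1 hx)).resolve_left two_ne_zero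
  have hne : A x * p (x + I) ≠ 0 := by
    simp only [hA, hp, mul_ne_zero_iff, prod_ne_zero_iff, ne_eq]
    refine ⟨⟨?_, ?_⟩, fun j _ => ?_⟩ <;> intro h <;>
      simpa [ha.ne', hb.ne'] using congrArg Complex.im h
  rw [hA, hp] at hre hne
  exact Complex.cos_eq_zero_of_re_eq_zero (hahn_eq_norm_mul_exp_hahnPhase ha hb x) hne hre

end ContinuousHahn

open ContinuousHahn in
theorem continuous_hahn_gap_bounds
    (n : ℕ) (a b : ℝ) (ha : 0 < a) (hb : 0 < b)
    (ξ : Fin n → ℝ)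
    (hdec : ∀ j j' : Fin n, j < j' → ξ j' < ξ j)
    (p : ℂ → ℂ)
    (hp : ∀ z : ℂ, p z = ∏ j : Fin n, (z - (ξ j : ℂ)))
    (A : ℂ → ℂ)
    (hA : ∀ z : ℂ, A z = (z + Complex.I * (a : ℂ)) * (z + Complex.I * (b : ℂ)))
    (En : ℝ)
    (heq : ∀ z : ℂ,
      A z * (p (z + Complex.I) - p z) + A (-z) * (p (z - Complex.I) - p z)
        = (En : ℂ) * p z)
    (km : ℝ)
    (hkm : km = (n : ℝ) + a⁻¹ + b⁻¹) :
    ∀ j j' : Fin n, j < j' → π * ((j'.val : ℝ) - j.val) / km ≤ ξ j - ξ j' := by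
  have hroot (k : Fin n) : cos (hahnPhase a b ξ (ξ k)) = 0 := by
    have hpk : p (ξ k) = 0 := by rw [hp]; exact prod_eq_zero (mem_univ k) (sub_self _)
    exact cos_hahnPhase_eq_zero ha hb hp hA (by simpa [hpk] using heq (ξ k))
  intro j j' hjj'
  rw [div_le_iff₀ (by rw [hkm]; positivity), mul_comm _ km]
  calc π * ((j' : ℝ) - j)
      ≤ hahnPhase a b ξ (ξ j') - hahnPhase a b ξ (ξ j) :=
        pi_mul_sub_le_sub_of_cos_eq_zero ((hahnPhase_strictAnti ha hb).comp hdec)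
          hroot hjj'.le
    _ ≤ km * (ξ j - ξ j') := hkm ▸ hahnPhase_sub_le ha hb (hdec j j' hjj').le
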